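/- arXiv:2102.07609 — 3 statements merged into one kernel-verified Lean document; each statement's English description precedes it below -/
import Mathlib

section
/- Let (M,ρ) be a pseudometric space, X a two-dimensional real Banach space, and F a set-valued mapping assigning to each x ∈ M a nonempty compact convex subset F(x) ⊆ X. Assume that for every subset M' ⊆ M with at most 4 points there is a selection f : M' → X with ‖f(x) − f(y)‖ ≤ ρ(x,y) on M'. Let λ1 ≥ 1. Then for every x ∈ M the first balanced refinement F¹(x) = ⋂_{z∈M} (F(z) + λ1·ρ(x,z)·B_X) is a nonempty convex bounded subset of X. -/
/-! Each set `F z + λ ρ(x, z) B_X` is compact and convex, so by Helly's theorem in the plane it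
suffices that any three of them meet. For `z₁, z₂, z₃`, a selection `f` on `{x, z₁, z₂, z₃}`
gives the common point `f x`, since `‖f x - f zᵢ‖ ≤ ρ(x, zᵢ) ≤ λ ρ(x, zᵢ)`. -/

open Pointwise Metric Module

section

variable {M X : Type*} [NormedAddCommGroup X]

def balancedRefinement (ρ : M → M → ℝ) (F : M → Set X) (lam : ℝ) (x : M) : Set X :=
  ⋂ z, F z + closedBall (0 : X) (lam * ρ x z)

theorem mem_add_closedBall_zero_of_norm_sub_le {S : Set X} {a b : X} {r : ℝ} (ha : a ∈ S)
    (hab : ‖b - a‖ ≤ r) : b ∈ S + closedBall (0 : X) r :=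
  ⟨a, ha, b - a, mem_closedBall_zero_iff.2 hab, add_sub_cancel a b⟩

namespace balancedRefinement

variable {ρ : M → M → ℝ} {F : M → Set X} {lam : ℝ}

theorem isBounded {x : M} (hFx : Bornology.IsBounded (F x)) :
    Bornology.IsBounded (balancedRefinement ρ F lam x) :=
  (hFx.add isBounded_closedBall).subset (Set.iInter_subset _ x)

variable [NormedSpace ℝ X]

theorem convex (hFcv : ∀ z, Convex ℝ (F z)) (x : M) :
    Convex ℝ (balancedRefinement ρ F lam x) :=
  convex_iInter fun z => (hFcv z).add (convex_closedBall 0 _)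

theorem nonempty [FiniteDimensional ℝ X] (hFcp : ∀ z, IsCompact (F z))
    (hFcv : ∀ z, Convex ℝ (F z)) (hlam : 1 ≤ lam)
    (hsel : ∀ M' : Finset M, M'.card ≤ finrank ℝ X + 2 →
      ∃ f : M → X, (∀ x ∈ M', f x ∈ F x) ∧ ∀ x ∈ M', ∀ y ∈ M', ‖f x - f y‖ ≤ ρ x y)
    (x : M) : (balancedRefinement ρ F lam x).Nonempty := by
  classical
  refine Convex.helly_theorem_compact' (fun z => (hFcv z).add (convex_closedBall 0 _))
    (fun z => (hFcp z).add (isCompact_closedBall 0 _)) fun I hI => ?_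
  obtain ⟨f, hfF, hfρ⟩ := hsel (insert x I) ((I.card_insert_le x).trans (by omega))
  refine ⟨f x, Set.mem_iInter₂.2 fun z hz => ?_⟩
  have hz' : z ∈ insert x I := Finset.mem_insert_of_mem hz
  have hdist : ‖f x - f z‖ ≤ ρ x z := hfρ x (I.mem_insert_self x) z hz'
  exact mem_add_closedBall_zero_of_norm_sub_le (hfF z hz')
    (hdist.trans (le_mul_of_one_le_left ((norm_nonneg _).trans hdist) hlam))

end balancedRefinement

end

theorem first_refinement_nonempty_two_dim_general
    {M : Type*} (ρ : M → M → ℝ)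
    {X : Type*} [NormedAddCommGroup X] [NormedSpace ℝ X]
    (hdim : Module.finrank ℝ X = 2)
    (F : M → Set X)
    (hFcp : ∀ x, IsCompact (F x))
    (hFcv : ∀ x, Convex ℝ (F x))
    -- finiteness hypothesis: selections on subsets of at most 4 points
    (hfin : ∀ M' : Finset M, M'.card ≤ 4 →
      ∃ f : M → X, (∀ x ∈ M', f x ∈ F x) ∧
        ∀ x ∈ M', ∀ y ∈ M', ‖f x - f y‖ ≤ ρ x y)
    (lam1 : ℝ) (hlam1 : 1 ≤ lam1)
    (F1 : M → Set X)
    (hF1 : ∀ x, F1 x = ⋂ z, F z + closedBall (0 : X) (lam1 * ρ x z)) :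
    ∀ x, (F1 x).Nonempty ∧ Convex ℝ (F1 x) ∧ Bornology.IsBounded (F1 x) := by
  have : FiniteDimensional ℝ X := .of_finrank_eq_succ hdim
  intro x
  have hF1x : F1 x = balancedRefinement ρ F lam1 x := hF1 x
  rw [hF1x]
  exact ⟨balancedRefinement.nonempty hFcp hFcv hlam1 (by rwa [hdim]) x,
    balancedRefinement.convex hFcv x, balancedRefinement.isBounded (hFcp x).isBounded⟩

theorem first_refinement_nonempty_two_dim
    {M : Type*} (ρ : M → M → ℝ)
    (hρ_refl : ∀ x, ρ x x = 0)
    (hρ_symm : ∀ x y, ρ x y = ρ y x)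
    (hρ_tri : ∀ x y z, ρ x z ≤ ρ x y + ρ y z)
    {X : Type*} [NormedAddCommGroup X] [NormedSpace ℝ X]
    (hdim : Module.finrank ℝ X = 2)
    (F : M → Set X)
    (hFne : ∀ x, (F x).Nonempty)
    (hFcp : ∀ x, IsCompact (F x))
    (hFcv : ∀ x, Convex ℝ (F x))
    -- finiteness hypothesis: selections on subsets of at most 4 points
    (hfin : ∀ M' : Finset M, M'.card ≤ 4 →
      ∃ f : M → X, (∀ x ∈ M', f x ∈ F x) ∧
        ∀ x ∈ M', ∀ y ∈ M', ‖f x - f y‖ ≤ ρ x y)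
    (lam1 : ℝ) (hlam1 : 1 ≤ lam1)
    (F1 : M → Set X)
    (hF1 : ∀ x, F1 x = ⋂ z, F z + closedBall (0 : X) (lam1 * ρ x z)) :
    ∀ x, (F1 x).Nonempty ∧ Convex ℝ (F1 x) ∧ Bornology.IsBounded (F1 x) :=
  first_refinement_nonempty_two_dim_general ρ hdim F hFcp hFcv hfin lam1 hlam1 F1 hF1
end

section
/- Let X be a real Banach space and let 𝒦 be a collection of closed convex subsets of X containing a nonempty compact convex set K0 of dimension at most 1 (a point or a closed bounded segment). Suppose the total intersection ⋂_{K∈𝒦} K is nonempty. Then for every r ≥ 0, (⋂_{K∈𝒦} K) + r·B_X = ⋂_{K∈𝒦} ((K ∩ K0) + r·B_X), where B_X is the closed unit ball of X. -/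
open Pointwise Metric Set

/-! If `x` lies within `r` of every `K ∩ K0`, the compact convex sets `K ∩ K0` (for `K ∈ 𝒦`) and
`K0 ∩ closedBall x r` all lie on one line and meet pairwise: two of the first kind at a point of
the total intersection, and one of each kind by the choice of `x`. Helly's theorem on a line
needs nothing more, so they have a common point, which lies in `⋂ 𝒦` within `r` of `x`. -/

theorem Real.iInter_nonempty_of_isCompact_of_inter_nonempty {ι : Type*} {F : ι → Set ℝ}
    (hconv : ∀ i, Convex ℝ (F i)) (hcpt : ∀ i, IsCompact (F i))
    (hpair : ∀ i j, (F i ∩ F j).Nonempty) : (⋂ i, F i).Nonempty := by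
  classical
  refine Convex.helly_theorem_compact' hconv hcpt fun I hI => ?_
  rw [Module.finrank_self] at hI
  obtain h | h | h : I.card = 0 ∨ I.card = 1 ∨ I.card = 2 := by omega
  · simp [Finset.card_eq_zero.mp h]
  · obtain ⟨i, rfl⟩ := Finset.card_eq_one.mp h
    simpa using hpair i i
  · obtain ⟨i, j, -, rfl⟩ := Finset.card_eq_two.mp h
    simpa using hpair i j

theorem mem_add_closedBall_zero_iff {X : Type*} [SeminormedAddCommGroup X] {s : Set X} {r : ℝ}
    {x : X} : x ∈ s + closedBall 0 r ↔ (s ∩ closedBall x r).Nonempty := by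
  constructor
  · rintro ⟨y, hy, b, hb, rfl⟩
    exact ⟨y, hy, by simpa [dist_eq_norm] using hb⟩
  · rintro ⟨y, hy, hxy⟩
    refine ⟨y, hy, x - y, mem_closedBall_zero_iff.mpr ?_, add_sub_cancel y x⟩
    rwa [mem_closedBall', dist_eq_norm] at hxy

theorem iInter_nonempty_of_subset_line {X : Type*} [NormedAddCommGroup X] [NormedSpace ℝ X]
    {ι : Type*} {F : ι → Set X} (a d : X) (hline : ∀ i, ∀ y ∈ F i, ∃ t : ℝ, y = a + t • d)
    (hconv : ∀ i, Convex ℝ (F i)) (hcpt : ∀ i, IsCompact (F i))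
    (hpair : ∀ i j, (F i ∩ F j).Nonempty) : (⋂ i, F i).Nonempty := by
  by_cases hd : d = 0
  · refine ⟨a, mem_iInter.mpr fun i => ?_⟩
    obtain ⟨y, hy, -⟩ := hpair i i
    obtain ⟨t, rfl⟩ := hline i y hy
    simpa [hd] using hy
  set L : ℝ →ᵃ[ℝ] X := AffineMap.lineMap a (a + d)
  have hL : ∀ t : ℝ, L t = a + t • d := fun t => by
    simp [L, AffineMap.lineMap_apply, add_comm]
  have hLemb : Topology.IsClosedEmbedding L := by
    have : (L : ℝ → X) = (Homeomorph.addLeft a) ∘ fun t : ℝ => t • d := funext hL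
    rw [this]
    exact (Homeomorph.addLeft a).isClosedEmbedding.comp (isClosedEmbedding_smul_left hd)
  obtain ⟨t, ht⟩ := Real.iInter_nonempty_of_isCompact_of_inter_nonempty (F := fun i => L ⁻¹' F i)
    (fun i => (hconv i).affine_preimage L) (fun i => hLemb.isCompact_preimage (hcpt i))
    fun i j => by
      obtain ⟨y, hyi, hyj⟩ := hpair i j
      obtain ⟨t, rfl⟩ := hline i y hyi
      exact ⟨t, by simpa [hL] using hyi, by simpa [hL] using hyj⟩
  exact ⟨L t, by simpa using ht⟩

theorem neighborhood_of_total_intersection_one_dim_general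
    {X : Type*} [NormedAddCommGroup X] [NormedSpace ℝ X]
    (𝒦 : Set (Set X)) (K0 : Set X) (hK0mem : K0 ∈ 𝒦)
    (hK0cp : IsCompact K0) (hK0cv : Convex ℝ K0)
    -- `K0` has dimension at most 1: it lies on a line
    (hK0dim : ∃ a d : X, ∀ y ∈ K0, ∃ t : ℝ, y = a + t • d)
    (hcl : ∀ K ∈ 𝒦, IsClosed K) (hcv : ∀ K ∈ 𝒦, Convex ℝ K)
    (hint : (⋂ K ∈ 𝒦, K).Nonempty)
    (r : ℝ) :
    (⋂ K ∈ 𝒦, K) + closedBall (0 : X) r =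
      ⋂ K ∈ 𝒦, ((K ∩ K0) + closedBall (0 : X) r) := by
  refine Subset.antisymm (subset_iInter₂ fun K hK => add_subset_add_right
    (subset_inter (biInter_subset_of_mem hK) (biInter_subset_of_mem hK0mem))) fun x hx => ?_
  simp only [mem_iInter, mem_add_closedBall_zero_iff] at hx
  obtain ⟨z, hz⟩ := hint
  rw [mem_iInter₂] at hz
  obtain ⟨a, d, hline⟩ := hK0dim
  let F : Option 𝒦 → Set X := fun o => o.elim (K0 ∩ closedBall x r) fun K => K ∩ K0
  have hFK0 : ∀ o, F o ⊆ K0 := by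
    rintro (_ | K)
    exacts [inter_subset_left, inter_subset_right]
  have hF : (⋂ o, F o).Nonempty := by
    refine iInter_nonempty_of_subset_line a d (fun o y hy => hline y (hFK0 o hy)) ?_ ?_ ?_
    · rintro (_ | ⟨K, hK⟩)
      exacts [hK0cv.inter (convex_closedBall x r), (hcv K hK).inter hK0cv]
    · rintro (_ | ⟨K, hK⟩)
      exacts [hK0cp.inter_right isClosed_closedBall, hK0cp.inter_left (hcl K hK)]
    · rintro (_ | ⟨K, hK⟩) (_ | ⟨K', hK'⟩)
      · obtain ⟨y, ⟨-, hy0⟩, hyx⟩ := hx K0 hK0mem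
        exact ⟨y, ⟨hy0, hyx⟩, hy0, hyx⟩
      · obtain ⟨y, ⟨hyK, hy0⟩, hyx⟩ := hx K' hK'
        exact ⟨y, ⟨hy0, hyx⟩, hyK, hy0⟩
      · obtain ⟨y, ⟨hyK, hy0⟩, hyx⟩ := hx K hK
        exact ⟨y, ⟨hyK, hy0⟩, hy0, hyx⟩
      · exact ⟨z, ⟨hz K hK, hz K0 hK0mem⟩, hz K' hK', hz K0 hK0mem⟩
  obtain ⟨y, hy⟩ := hF
  rw [mem_iInter] at hy
  exact mem_add_closedBall_zero_iff.mpr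
    ⟨y, mem_iInter₂.mpr fun K hK => (hy (some ⟨K, hK⟩)).1, (hy none).2⟩

theorem neighborhood_of_total_intersection_one_dim
    {X : Type*} [NormedAddCommGroup X] [NormedSpace ℝ X]
    (𝒦 : Set (Set X)) (K0 : Set X) (hK0mem : K0 ∈ 𝒦)
    (hK0ne : K0.Nonempty) (hK0cp : IsCompact K0) (hK0cv : Convex ℝ K0)
    -- `K0` has dimension at most 1: it lies on a line
    (hK0dim : ∃ a d : X, ∀ y ∈ K0, ∃ t : ℝ, y = a + t • d)
    (hcl : ∀ K ∈ 𝒦, IsClosed K) (hcv : ∀ K ∈ 𝒦, Convex ℝ K)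
    (hint : (⋂ K ∈ 𝒦, K).Nonempty)
    (r : ℝ) (hr : 0 ≤ r) :
    (⋂ K ∈ 𝒦, K) + closedBall (0 : X) r =
      ⋂ K ∈ 𝒦, ((K ∩ K0) + closedBall (0 : X) r) :=
  neighborhood_of_total_intersection_one_dim_general 𝒦 K0 hK0mem hK0cp hK0cv hK0dim hcl hcv hint r
end

section
/- Let (M,ρ) be a pseudometric space and X a real Banach space with dim X > 1. Let F assign to each x ∈ M a nonempty compact convex subset F(x) ⊆ X of dimension at most 1 (a point or a closed bounded segment). Assume that for every subset M' ⊆ M with at most 4 points there is a selection f : M' → X with ‖f(x) − f(y)‖ ≤ ρ(x,y) on M'. Let λ1 ≥ 1 and λ2 ≥ 3λ1. Then for every x ∈ M the second balanced refinement F²(x) is nonempty. -/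
open Pointwise Metric
open Set AffineMap Convex

/-!
Write `P z w = F z ∩ (F w + λ₁ ρ(z, w) B)` (`refinementPiece`), so that `F z ∩ F¹(z) = ⋂ w, P z w`.
All sets involved lie on lines, where Helly's theorem only asks for pairwise intersections.

First, some `q ∈ F x` is within `3 λ₁ ρ(x, z)` of every `P z w`. For two conditions `(z, w)` and
`(z', w')`, take 1-Lipschitz selections `h`, `k`, `e` on `{x, z, z', w}`, `{x, z, z', w'}` and
`{z, z', w, w'}`; then `[h z, e z] ⊆ P z w` and `[k z', e z'] ⊆ P z' w'`. Moving along
`[h x, k x]` tracks the segments `[h z, k z]` and `[h z', k z']`, and as `e z`, `e z'` are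
`ρ(z, z')`-close, their positions on the two lines differ little; so some point of `[h x, k x]` is within `3 ρ(x, z)` of `[h z, e z]` and within `3 ρ(x, z')` of
`[k z', e z']`.

Second, for each `z` the sets `P z w` meet pairwise (by selections on `{z, w, w'}`) and each meets
the ball of radius `3 λ₁ ρ(x, z) ≤ λ₂ ρ(x, z)` around `q`, so Helly gives a point of `F¹(z)` in that
ball, and `q ∈ F²(x)`.
-/

theorem Finset.biInter_nonempty_of_card_le_two {ι α : Type*} [Nonempty α] {S : ι → Set α}
    (hS : ∀ i j, (S i ∩ S j).Nonempty) {I : Finset ι} (hI : I.card ≤ 2) :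
    (⋂ i ∈ I, S i).Nonempty := by
  classical
  rcases I.eq_empty_or_nonempty with rfl | ⟨i, hi⟩
  · simp
  have : Nonempty ι := ⟨i⟩
  obtain ⟨j, hj⟩ := Finset.card_le_one_iff_subset_singleton.1
    (show (I.erase i).card ≤ 1 by rw [Finset.card_erase_of_mem hi]; omega)
  obtain ⟨p, hpi, hpj⟩ := hS i j
  refine ⟨p, mem_iInter₂.2 fun k hk => ?_⟩
  rcases eq_or_ne k i with rfl | hki
  · exact hpi
  · rwa [Finset.mem_singleton.1 (hj (Finset.mem_erase.2 ⟨hki, hk⟩))]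

theorem Collinear.iInter_nonempty_of_inter_nonempty {X ι : Type*} [NormedAddCommGroup X]
    [NormedSpace ℝ X] {L : Set X} (hL : Collinear ℝ L) {S : ι → Set X} (hSL : ∀ i, S i ⊆ L)
    (hconv : ∀ i, Convex ℝ (S i))
    (hcomp : ∀ i, IsCompact (S i)) (hS : ∀ i j, (S i ∩ S j).Nonempty) :
    (⋂ i, S i).Nonempty := by
  obtain ⟨p₀, v, hv⟩ := (collinear_iff_exists_forall_eq_smul_vadd L).1 hL
  rcases eq_or_ne v 0 with rfl | hv0
  · refine ⟨p₀, mem_iInter.2 fun i => ?_⟩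
    obtain ⟨p, hp, -⟩ := hS i i
    obtain ⟨r, rfl⟩ := hv p (hSL i hp)
    simpa using hp
  -- pull the family back to the real line along `r ↦ r • v + p₀`, where Helly's number is 2
  set φ : ℝ →ᵃ[ℝ] X := lineMap p₀ (v + p₀)
  have hφ : ⇑φ = fun r : ℝ => r • v + p₀ := by
    funext r
    simp [φ, lineMap_apply_module']
  have hφemb : Topology.IsClosedEmbedding φ := hφ ▸
    (Homeomorph.addRight p₀).isClosedEmbedding.comp (isClosedEmbedding_smul_left hv0)
  have hφS : ∀ i, ∀ p ∈ S i, ∃ r, φ r = p := fun i p hp => by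
    obtain ⟨r, hr⟩ := hv p (hSL i hp)
    exact ⟨r, by rw [hφ, hr, vadd_eq_add]⟩
  obtain ⟨r, hr⟩ : (⋂ i, φ ⁻¹' S i).Nonempty := by
    refine helly_theorem_compact' (𝕜 := ℝ) (fun i => (hconv i).affine_preimage φ)
      (fun i => hφemb.isCompact_preimage (hcomp i)) fun I hI => ?_
    rw [Module.finrank_self] at hI
    refine Finset.biInter_nonempty_of_card_le_two (fun i j => ?_) hI
    obtain ⟨p, hpi, hpj⟩ := hS i j
    obtain ⟨r, rfl⟩ := hφS i p hpi
    exact ⟨r, hpi, hpj⟩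
  exact ⟨φ r, mem_iInter.2 fun i => mem_iInter.1 hr i⟩

section TwoLines

variable {X : Type*} [SeminormedAddCommGroup X] [NormedSpace ℝ X]

theorem dist_lineMap_lineMap_le {p₁ p₂ q₁ q₂ : X} {r c : ℝ} (hp : dist p₁ p₂ ≤ r)
    (hq : dist q₁ q₂ ≤ r) (hc : c ∈ Icc (0 : ℝ) 1) :
    dist (lineMap p₁ q₁ c) (lineMap p₂ q₂ c) ≤ r := by
  have hsub : lineMap p₁ q₁ c - lineMap p₂ q₂ c = lineMap (p₁ - p₂) (q₁ - q₂) c := by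
    simp only [lineMap_apply_module]
    module
  rw [dist_eq_norm, hsub, ← mem_closedBall_zero_iff]
  exact (convex_closedBall 0 r).lineMap_mem (mem_closedBall_zero_iff.2 (dist_eq_norm p₁ p₂ ▸ hp))
    (mem_closedBall_zero_iff.2 (dist_eq_norm q₁ q₂ ▸ hq)) hc

theorem lineMap_mem_segment_of_mem_uIcc (p q : X) {c c₁ c₂ : ℝ} (hc : c ∈ uIcc c₁ c₂) :
    lineMap p q c ∈ [lineMap p q c₁ -[ℝ] lineMap p q c₂] := by
  rw [← image_segment, segment_eq_uIcc]
  exact mem_image_of_mem _ hc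

theorem exists_lineMap_eq_of_collinear {p₁ p₂ p₃ : X} (h : Collinear ℝ {p₁, p₂, p₃})
    (hne : p₁ ≠ p₂) : ∃ t : ℝ, lineMap p₁ p₂ t = p₃ :=
  mem_affineSpan_pair_iff_exists_lineMap_eq.1 <| h.mem_affineSpan_of_mem_of_ne (by simp)
    (by simp) (by simp) hne

section ClosePairs

variable {h₁ k₁ h₂ k₂ : X} {s : ℝ}

theorem dist_mul_dist_le_of_dist_lineMap_le (hh : dist h₁ h₂ ≤ s) (hk : dist k₁ k₂ ≤ s)
    {t u : ℝ} (he : dist (lineMap h₁ k₁ t) (lineMap h₂ k₂ u) ≤ s) (hu : u ∈ Icc (0 : ℝ) 1) :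
    dist t u * dist h₁ k₁ ≤ 2 * s := by
  rw [← dist_lineMap_lineMap]
  linarith [dist_triangle (lineMap h₁ k₁ t) (lineMap h₂ k₂ u) (lineMap h₁ k₁ u),
    dist_comm (lineMap h₁ k₁ u) (lineMap h₂ k₂ u) ▸ dist_lineMap_lineMap_le hh hk hu]

theorem exists_mem_Icc_dist_lineMap_le (hh : dist h₁ h₂ ≤ s) (hk : dist k₁ k₂ ≤ s)
    {t u : ℝ} (he : dist (lineMap h₁ k₁ t) (lineMap h₂ k₂ u) ≤ s) :
    ∃ t' ∈ Icc (0 : ℝ) 1, ∃ u' ∈ Icc (0 : ℝ) 1, Icc 0 t' ⊆ uIcc 0 t ∧ Icc u' 1 ⊆ uIcc u 1 ∧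
      dist (lineMap h₁ k₁ t') (lineMap h₂ k₂ u') ≤ s := by
  -- the parameter pairs of `s`-close points form a convex set containing `(0, 0)` and `(1, 1)`
  have hconv : ∀ {c₁ c₁' c₂ c₂' μ : ℝ}, dist (lineMap h₁ k₁ c₁) (lineMap h₂ k₂ c₁') ≤ s →
      dist (lineMap h₁ k₁ c₂) (lineMap h₂ k₂ c₂') ≤ s → μ ∈ Icc (0 : ℝ) 1 →
      dist (lineMap h₁ k₁ (lineMap c₁ c₂ μ)) (lineMap h₂ k₂ (lineMap c₁' c₂' μ)) ≤ s := by
    intro c₁ c₁' c₂ c₂' μ hc₁ hc₂ hμ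
    rw [apply_lineMap, apply_lineMap]
    exact dist_lineMap_lineMap_le hc₁ hc₂ hμ
  have h00 : dist (lineMap h₁ k₁ (0 : ℝ)) (lineMap h₂ k₂ (0 : ℝ)) ≤ s := by simpa using hh
  have h11 : dist (lineMap h₁ k₁ (1 : ℝ)) (lineMap h₂ k₂ (1 : ℝ)) ≤ s := by simpa using hk
  rcases le_or_gt 1 t with ht | ht
  · exact ⟨1, right_mem_Icc.2 zero_le_one, 1, right_mem_Icc.2 zero_le_one,
      by rw [uIcc_of_le (by linarith)]; exact Icc_subset_Icc_right ht, by simp, h11⟩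
  rcases le_or_gt u 0 with hu | hu
  · exact ⟨0, left_mem_Icc.2 zero_le_one, 0, left_mem_Icc.2 zero_le_one, by simp,
      by rw [uIcc_of_le (by linarith)]; exact Icc_subset_Icc_left hu, h00⟩
  -- first move `t` into `[0, 1)`, pulling the pair towards `(1, 1)`
  obtain ⟨t₁, ht₁, u₁, hu₁, ht₁t, he₁⟩ : ∃ t₁ ∈ Icc (0 : ℝ) 1, ∃ u₁ ∈ uIcc u 1,
      Icc 0 t₁ ⊆ uIcc 0 t ∧ dist (lineMap h₁ k₁ t₁) (lineMap h₂ k₂ u₁) ≤ s := by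
    rcases le_or_gt 0 t with ht0 | ht0
    · exact ⟨t, ⟨ht0, ht.le⟩, u, left_mem_uIcc, Icc_subset_uIcc, he⟩
    have hμ : -t / (1 - t) ∈ Icc (0 : ℝ) 1 :=
      ⟨div_nonneg (by linarith) (by linarith), (div_le_one (by linarith)).2 (by linarith)⟩
    refine ⟨0, left_mem_Icc.2 zero_le_one, lineMap u 1 (-t / (1 - t)), ?_, by simp, ?_⟩
    · exact segment_eq_uIcc u 1 ▸ lineMap_mem_segment ℝ u 1 hμ
    · convert hconv he h11 hμ using 3
      rw [lineMap_apply_ring']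
      field_simp
      ring
  -- then move `u` into `(0, 1]`, pulling the pair towards `(0, 0)`
  have hu₁0 : 0 < u₁ := lt_of_lt_of_le (lt_min hu zero_lt_one) hu₁.1
  rcases le_or_gt u₁ 1 with hu₁1 | hu₁1
  · exact ⟨t₁, ht₁, u₁, ⟨hu₁0.le, hu₁1⟩, ht₁t,
      Icc_subset_Icc hu₁.1 le_sup_right, he₁⟩
  have hμ : 1 / u₁ ∈ Icc (0 : ℝ) 1 :=
    ⟨by positivity, (div_le_one hu₁0).2 hu₁1.le⟩
  refine ⟨t₁ / u₁, ⟨by positivity [ht₁.1], (div_le_one hu₁0).2 (by linarith [ht₁.2])⟩, 1,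
    right_mem_Icc.2 zero_le_one, (Icc_subset_Icc_right ?_).trans ht₁t, by simp, ?_⟩
  · exact div_le_self ht₁.1 hu₁1.le
  · convert hconv h00 he₁ hμ using 3 <;> rw [lineMap_apply_ring'] <;> field_simp <;> ring

end ClosePairs

theorem exists_mem_Icc_dist_mul_le {a a' D D' t u : ℝ} (ha : 0 ≤ a) (ha' : 0 ≤ a')
    (ht : t ∈ Icc (0 : ℝ) 1) (hu : u ∈ Icc (0 : ℝ) 1)
    (hD : dist t u * D ≤ 2 * (a + a')) (hD' : dist t u * D' ≤ 2 * (a + a')) :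
    ∃ θ ∈ Icc (0 : ℝ) 1, ∃ τ ∈ Icc 0 t, ∃ σ ∈ Icc u 1,
      dist θ τ * D ≤ 2 * a ∧ dist θ σ * D' ≤ 2 * a' := by
  rcases le_total u t with hut | htu
  · exact ⟨t, ht, t, ⟨ht.1, le_rfl⟩, t, ⟨hut, ht.2⟩, by simp [ha], by simp [ha']⟩
  -- split the gap `u - t` in the ratio `a : a'`
  obtain ⟨μ, hμ0, hμ1, hμa, hμa'⟩ : ∃ μ : ℝ, 0 ≤ μ ∧ μ ≤ 1 ∧
      μ * (a + a') = a ∧ (1 - μ) * (a + a') = a' := by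
    rcases (add_nonneg ha ha').eq_or_lt with hs | hs
    · exact ⟨0, le_rfl, zero_le_one, by linarith, by linarith⟩
    refine ⟨a / (a + a'), by positivity, (div_le_one hs).2 (by linarith), by field_simp, ?_⟩
    field_simp
    ring
  refine ⟨lineMap t u μ, (convex_Icc 0 1).lineMap_mem ht hu ⟨hμ0, hμ1⟩, t, ⟨ht.1, le_rfl⟩,
    u, ⟨le_rfl, hu.2⟩, ?_, ?_⟩
  · rw [dist_lineMap_left, Real.norm_of_nonneg hμ0, ← hμa]
    linarith [mul_le_mul_of_nonneg_left hD hμ0]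
  · rw [dist_lineMap_right, Real.norm_of_nonneg (sub_nonneg.2 hμ1), ← hμa']
    linarith [mul_le_mul_of_nonneg_left hD' (sub_nonneg.2 hμ1)]

theorem exists_near_segments {h₁ k₁ e₁ h₂ k₂ e₂ : X} {a a' : ℝ} (ha : 0 ≤ a) (ha' : 0 ≤ a')
    (hcol₁ : Collinear ℝ {h₁, k₁, e₁}) (hcol₂ : Collinear ℝ {h₂, k₂, e₂})
    (hh : dist h₁ h₂ ≤ a + a') (hk : dist k₁ k₂ ≤ a + a') (he : dist e₁ e₂ ≤ a + a') :
    ∃ θ ∈ Icc (0 : ℝ) 1, ∃ y ∈ [h₁ -[ℝ] e₁], ∃ y' ∈ [k₂ -[ℝ] e₂],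
      dist (lineMap h₁ k₁ θ) y ≤ 2 * a ∧ dist (lineMap h₂ k₂ θ) y' ≤ 2 * a' := by
  rcases eq_or_ne h₁ k₁ with rfl | hne₁
  · exact ⟨1, right_mem_Icc.2 zero_le_one, h₁, left_mem_segment _ _ _, k₂,
      left_mem_segment _ _ _, by simp [ha], by simp [ha']⟩
  rcases eq_or_ne h₂ k₂ with rfl | hne₂
  · exact ⟨0, left_mem_Icc.2 zero_le_one, h₁, left_mem_segment _ _ _, h₂,
      left_mem_segment _ _ _, by simp [ha], by simp [ha']⟩
  obtain ⟨t, rfl⟩ := exists_lineMap_eq_of_collinear hcol₁ hne₁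
  obtain ⟨u, rfl⟩ := exists_lineMap_eq_of_collinear hcol₂ hne₂
  obtain ⟨t', ht', u', hu', htt', huu', he'⟩ := exists_mem_Icc_dist_lineMap_le hh hk he
  obtain ⟨θ, hθ, τ, hτ, σ, hσ, hθτ, hθσ⟩ := exists_mem_Icc_dist_mul_le ha ha' ht' hu'
    (dist_mul_dist_le_of_dist_lineMap_le hh hk he' hu')
    (dist_comm u' t' ▸ dist_mul_dist_le_of_dist_lineMap_le (dist_comm h₁ h₂ ▸ hh)
      (dist_comm k₁ k₂ ▸ hk) (dist_comm (lineMap h₁ k₁ t') _ ▸ he') ht')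
  refine ⟨θ, hθ, lineMap h₁ k₁ τ, ?_, lineMap h₂ k₂ σ, ?_, ?_, ?_⟩
  · simpa using lineMap_mem_segment_of_mem_uIcc h₁ k₁ (htt' hτ)
  · simpa [segment_symm] using lineMap_mem_segment_of_mem_uIcc h₂ k₂ (huu' hσ)
  · rwa [dist_lineMap_lineMap]
  · rwa [dist_lineMap_lineMap]

theorem exists_mem_segment_near_segments {x₁ x₂ h₁ k₁ e₁ h₂ k₂ e₂ : X} {a a' : ℝ}
    (hcol₁ : Collinear ℝ {h₁, k₁, e₁}) (hcol₂ : Collinear ℝ {h₂, k₂, e₂})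
    (hh₁ : dist x₁ h₁ ≤ a) (hk₁ : dist x₂ k₁ ≤ a) (hh₂ : dist x₁ h₂ ≤ a')
    (hk₂ : dist x₂ k₂ ≤ a') (he : dist e₁ e₂ ≤ a + a') :
    ∃ q ∈ [x₁ -[ℝ] x₂], ∃ y ∈ [h₁ -[ℝ] e₁], ∃ y' ∈ [k₂ -[ℝ] e₂],
      dist q y ≤ 3 * a ∧ dist q y' ≤ 3 * a' := by
  obtain ⟨θ, hθ, y, hy, y', hy', hθy, hθy'⟩ :=
    exists_near_segments (dist_nonneg.trans hh₁) (dist_nonneg.trans hh₂) hcol₁ hcol₂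
      (by linarith [dist_triangle_left h₁ h₂ x₁]) (by linarith [dist_triangle_left k₁ k₂ x₂]) he
  refine ⟨lineMap x₁ x₂ θ, lineMap_mem_segment ℝ x₁ x₂ hθ, y, hy, y', hy', ?_, ?_⟩
  · linarith [dist_triangle (lineMap x₁ x₂ θ) (lineMap h₁ k₁ θ) y,
      dist_lineMap_lineMap_le hh₁ hk₁ hθ]
  · linarith [dist_triangle (lineMap x₁ x₂ θ) (lineMap h₂ k₂ θ) y',
      dist_lineMap_lineMap_le hh₂ hk₂ hθ]

end TwoLines

section Refinement

variable {M X : Type*} [SeminormedAddCommGroup X]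

theorem mem_add_closedBall_zero_iff_s14 {S : Set X} {p : X} {r : ℝ} :
    p ∈ S + closedBall 0 r ↔ ∃ y ∈ S, dist p y ≤ r := by
  simp only [mem_add, mem_closedBall_zero_iff, dist_eq_norm]
  constructor
  · rintro ⟨y, hy, b, hb, rfl⟩
    exact ⟨y, hy, by rwa [add_sub_cancel_left]⟩
  · rintro ⟨y, hy, hpy⟩
    exact ⟨y, hy, p - y, hpy, add_sub_cancel y p⟩

def IsLipschitzSelectionOn (ρ : M → M → ℝ) (F : M → Set X) (S : Finset M) (f : M → X) : Prop :=
  (∀ x ∈ S, f x ∈ F x) ∧ ∀ x ∈ S, ∀ y ∈ S, ‖f x - f y‖ ≤ ρ x y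

def refinementPiece (ρ : M → M → ℝ) (F : M → Set X) (lam : ℝ) (z w : M) : Set X :=
  F z ∩ (F w + closedBall 0 (lam * ρ z w))

variable {ρ : M → M → ℝ} {F : M → Set X} {lam : ℝ}

theorem isCompact_refinementPiece (hFcp : ∀ x, IsCompact (F x)) (z w : M) :
    IsCompact (refinementPiece ρ F lam z w) :=
  (hFcp z).inter_right (isClosed_closedBall.add_left_of_isCompact (hFcp w))

namespace IsLipschitzSelectionOn

variable {S : Finset M} {f : M → X} {x y : M}

theorem mem (hf : IsLipschitzSelectionOn ρ F S f) (hx : x ∈ S) : f x ∈ F x :=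
  hf.1 x hx

theorem dist_le (hf : IsLipschitzSelectionOn ρ F S f) (hx : x ∈ S) (hy : y ∈ S) :
    dist (f x) (f y) ≤ ρ x y :=
  dist_eq_norm (f x) (f y) ▸ hf.2 x hx y hy

theorem mem_refinementPiece (hf : IsLipschitzSelectionOn ρ F S f) (hlam : 1 ≤ lam)
    (hρ : 0 ≤ ρ x y) (hx : x ∈ S) (hy : y ∈ S) : f x ∈ refinementPiece ρ F lam x y :=
  ⟨hf.mem hx, mem_add_closedBall_zero_iff_s14.2
    ⟨f y, hf.mem hy, (hf.dist_le hx hy).trans (le_mul_of_one_le_left hρ hlam)⟩⟩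

end IsLipschitzSelectionOn

section NormedSpace

variable [NormedSpace ℝ X]

theorem convex_refinementPiece (hFcv : ∀ x, Convex ℝ (F x)) (z w : M) :
    Convex ℝ (refinementPiece ρ F lam z w) :=
  (hFcv z).inter ((hFcv w).add (convex_closedBall _ _))

end NormedSpace

end Refinement

section Selection

variable {M X : Type*} [NormedAddCommGroup X] [NormedSpace ℝ X] {ρ : M → M → ℝ} {F : M → Set X}
  {lam : ℝ}

theorem exists_mem_refinementPiece_add_closedBall (hρ : ∀ x y, 0 ≤ ρ x y)
    (hρ_symm : ∀ x y, ρ x y = ρ y x) (hρ_tri : ∀ x y z, ρ x z ≤ ρ x y + ρ y z)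
    (hFcol : ∀ x, Collinear ℝ (F x)) (hFcv : ∀ x, Convex ℝ (F x))
    (hsel : ∀ S : Finset M, S.card ≤ 4 → ∃ f, IsLipschitzSelectionOn ρ F S f) (hlam : 1 ≤ lam)
    (x z w z' w' : M) :
    ∃ q ∈ F x, q ∈ refinementPiece ρ F lam z w + closedBall 0 (3 * lam * ρ x z) ∧
      q ∈ refinementPiece ρ F lam z' w' + closedBall 0 (3 * lam * ρ x z') := by
  classical
  obtain ⟨h, hh⟩ := hsel {x, z, z', w} Finset.card_le_four
  obtain ⟨k, hk⟩ := hsel {x, z, z', w'} Finset.card_le_four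
  obtain ⟨e, he⟩ := hsel {z, z', w, w'} Finset.card_le_four
  have hcol : ∀ {z p₁ p₂ p₃}, p₁ ∈ F z → p₂ ∈ F z → p₃ ∈ F z → Collinear ℝ {p₁, p₂, p₃} :=
    fun h₁ h₂ h₃ => (hFcol _).subset
      (insert_subset h₁ (insert_subset h₂ (singleton_subset_iff.2 h₃)))
  obtain ⟨q, hq, y, hy, y', hy', hqy, hqy'⟩ := exists_mem_segment_near_segments
    (hcol (hh.mem (by simp)) (hk.mem (by simp)) (he.mem (by simp)))
    (hcol (hh.mem (by simp)) (hk.mem (by simp)) (he.mem (by simp)))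
    (hh.dist_le (by simp) (by simp)) (hk.dist_le (by simp) (by simp))
    (hh.dist_le (by simp) (by simp)) (hk.dist_le (by simp) (by simp))
    ((he.dist_le (by simp) (by simp)).trans (hρ_symm x z ▸ hρ_tri z x z'))
  have h3 : ∀ {v}, 3 * ρ x v ≤ 3 * lam * ρ x v := fun {v} =>
    mul_le_mul_of_nonneg_right (by linarith) (hρ x v)
  refine ⟨q, (hFcv x).segment_subset (hh.mem (by simp)) (hk.mem (by simp)) hq,
    mem_add_closedBall_zero_iff_s14.2 ⟨y, ?_, hqy.trans h3⟩,
    mem_add_closedBall_zero_iff_s14.2 ⟨y', ?_, hqy'.trans h3⟩⟩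
  · exact (convex_refinementPiece hFcv z w).segment_subset
      (hh.mem_refinementPiece hlam (hρ z w) (by simp) (by simp))
      (he.mem_refinementPiece hlam (hρ z w) (by simp) (by simp)) hy
  · exact (convex_refinementPiece hFcv z' w').segment_subset
      (hk.mem_refinementPiece hlam (hρ z' w') (by simp) (by simp))
      (he.mem_refinementPiece hlam (hρ z' w') (by simp) (by simp)) hy'

theorem exists_mem_forall_mem_refinementPiece_add_closedBall (hρ : ∀ x y, 0 ≤ ρ x y)
    (hρ_symm : ∀ x y, ρ x y = ρ y x) (hρ_tri : ∀ x y z, ρ x z ≤ ρ x y + ρ y z)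
    (hFcol : ∀ x, Collinear ℝ (F x)) (hFcv : ∀ x, Convex ℝ (F x)) (hFcp : ∀ x, IsCompact (F x))
    (hsel : ∀ S : Finset M, S.card ≤ 4 → ∃ f, IsLipschitzSelectionOn ρ F S f) (hlam : 1 ≤ lam)
    (x : M) :
    ∃ q ∈ F x, ∀ z w, q ∈ refinementPiece ρ F lam z w + closedBall 0 (3 * lam * ρ x z) := by
  obtain ⟨q, hq⟩ := (hFcol x).iInter_nonempty_of_inter_nonempty
    (S := fun p : M × M => F x ∩ (refinementPiece ρ F lam p.1 p.2 +
      closedBall 0 (3 * lam * ρ x p.1)))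
    (fun _ => inter_subset_left)
    (fun p => (hFcv x).inter ((convex_refinementPiece hFcv p.1 p.2).add (convex_closedBall _ _)))
    (fun p => (hFcp x).inter_right
      (isClosed_closedBall.add_left_of_isCompact (isCompact_refinementPiece hFcp p.1 p.2)))
    (fun p p' => by
      obtain ⟨q, hqx, hq, hq'⟩ := exists_mem_refinementPiece_add_closedBall hρ hρ_symm hρ_tri
        hFcol hFcv hsel hlam x p.1 p.2 p'.1 p'.2
      exact ⟨q, ⟨hqx, hq⟩, hqx, hq'⟩)
  exact ⟨q, (mem_iInter.1 hq (x, x)).1, fun z w => (mem_iInter.1 hq (z, w)).2⟩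

theorem exists_forall_mem_add_closedBall_dist_le (hρ : ∀ x y, 0 ≤ ρ x y)
    (hFcol : ∀ x, Collinear ℝ (F x)) (hFcv : ∀ x, Convex ℝ (F x)) (hFcp : ∀ x, IsCompact (F x))
    (hsel : ∀ S : Finset M, S.card ≤ 4 → ∃ f, IsLipschitzSelectionOn ρ F S f) (hlam : 1 ≤ lam)
    {z : M} {q : X} {r : ℝ}
    (hq : ∀ w, q ∈ refinementPiece ρ F lam z w + closedBall 0 r) :
    ∃ y, (∀ w, y ∈ F w + closedBall 0 (lam * ρ z w)) ∧ dist q y ≤ r := by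
  have hnear : ∀ w, ∃ y ∈ refinementPiece ρ F lam z w, y ∈ closedBall q r := fun w => by
    obtain ⟨y, hy, hqy⟩ := mem_add_closedBall_zero_iff_s14.1 (hq w)
    exact ⟨y, hy, mem_closedBall_comm.1 (mem_closedBall.2 hqy)⟩
  obtain ⟨y, hy⟩ := (hFcol z).iInter_nonempty_of_inter_nonempty
    (S := fun o : Option M => o.elim (F z ∩ closedBall q r) (refinementPiece ρ F lam z))
    (by rintro (_ | w) <;> exact inter_subset_left)
    (by
      rintro (_ | w)
      exacts [(hFcv z).inter (convex_closedBall q r), convex_refinementPiece hFcv z w])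
    (by
      rintro (_ | w)
      exacts [(hFcp z).inter_right isClosed_closedBall, isCompact_refinementPiece hFcp z w])
    (by
      rintro (_ | w) (_ | w')
      · obtain ⟨y, hy, hqy⟩ := hnear z
        exact ⟨y, ⟨hy.1, hqy⟩, hy.1, hqy⟩
      · obtain ⟨y, hy, hqy⟩ := hnear w'
        exact ⟨y, ⟨hy.1, hqy⟩, hy⟩
      · obtain ⟨y, hy, hqy⟩ := hnear w
        exact ⟨y, hy, hy.1, hqy⟩
      · classical
        obtain ⟨f, hf⟩ := hsel {z, w, w'} (Finset.card_le_three.trans (by norm_num))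
        exact ⟨f z, hf.mem_refinementPiece hlam (hρ z w) (by simp) (by simp),
          hf.mem_refinementPiece hlam (hρ z w') (by simp) (by simp)⟩)
  exact ⟨y, fun w => (mem_iInter.1 hy (some w)).2,
    dist_comm q y ▸ mem_closedBall.1 (mem_iInter.1 hy none).2⟩

end Selection

theorem second_refinement_nonempty_one_dim_general
    {M : Type*} (ρ : M → M → ℝ)
    (hρ_refl : ∀ x, ρ x x = 0)
    (hρ_symm : ∀ x y, ρ x y = ρ y x)
    (hρ_tri : ∀ x y z, ρ x z ≤ ρ x y + ρ y z)
    {X : Type*} [NormedAddCommGroup X] [NormedSpace ℝ X]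
    (F : M → Set X)
    (hFcp : ∀ x, IsCompact (F x))
    (hFcv : ∀ x, Convex ℝ (F x))
    -- every set `F x` has dimension at most 1: it lies on a line
    (hFdim : ∀ x, ∃ a d : X, ∀ y ∈ F x, ∃ t : ℝ, y = a + t • d)
    -- finiteness hypothesis: selections on subsets of at most 4 points
    (hfin : ∀ M' : Finset M, M'.card ≤ 4 →
      ∃ f : M → X, (∀ x ∈ M', f x ∈ F x) ∧
        ∀ x ∈ M', ∀ y ∈ M', ‖f x - f y‖ ≤ ρ x y)
    (lam1 lam2 : ℝ) (hlam1 : 1 ≤ lam1) (hlam2 : 3 * lam1 ≤ lam2)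
    (F1 F2 : M → Set X)
    (hF1 : ∀ x, F1 x = ⋂ z, F z + closedBall (0 : X) (lam1 * ρ x z))
    (hF2 : ∀ x, F2 x = ⋂ z, F1 z + closedBall (0 : X) (lam2 * ρ x z)) :
    ∀ x, (F2 x).Nonempty := by
  intro x
  have hρ : ∀ x y, 0 ≤ ρ x y := fun x y => by
    linarith [hρ_tri x y x, hρ_refl x, hρ_symm x y]
  have hFcol : ∀ x, Collinear ℝ (F x) := fun x => by
    obtain ⟨a, d, hd⟩ := hFdim x
    refine (collinear_iff_exists_forall_eq_smul_vadd _).2 ⟨a, d, fun y hy => ?_⟩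
    obtain ⟨t, rfl⟩ := hd y hy
    exact ⟨t, add_comm _ _⟩
  obtain ⟨q, -, hq⟩ := exists_mem_forall_mem_refinementPiece_add_closedBall hρ hρ_symm hρ_tri
    hFcol hFcv hFcp hfin hlam1 x
  refine ⟨q, hF2 x ▸ mem_iInter.2 fun z => ?_⟩
  obtain ⟨y, hy, hqy⟩ := exists_forall_mem_add_closedBall_dist_le hρ hFcol hFcv hFcp hfin hlam1
    (hq z)
  exact mem_add_closedBall_zero_iff_s14.2 ⟨y, hF1 z ▸ mem_iInter.2 hy,
    hqy.trans (mul_le_mul_of_nonneg_right hlam2 (hρ x z))⟩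

theorem second_refinement_nonempty_one_dim
    {M : Type*} (ρ : M → M → ℝ)
    (hρ_refl : ∀ x, ρ x x = 0)
    (hρ_symm : ∀ x y, ρ x y = ρ y x)
    (hρ_tri : ∀ x y z, ρ x z ≤ ρ x y + ρ y z)
    {X : Type*} [NormedAddCommGroup X] [NormedSpace ℝ X] [CompleteSpace X]
    (hdim : 1 < Module.rank ℝ X)
    (F : M → Set X)
    (hFne : ∀ x, (F x).Nonempty)
    (hFcp : ∀ x, IsCompact (F x))
    (hFcv : ∀ x, Convex ℝ (F x))
    -- every set `F x` has dimension at most 1: it lies on a line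
    (hFdim : ∀ x, ∃ a d : X, ∀ y ∈ F x, ∃ t : ℝ, y = a + t • d)
    -- finiteness hypothesis: selections on subsets of at most 4 points
    (hfin : ∀ M' : Finset M, M'.card ≤ 4 →
      ∃ f : M → X, (∀ x ∈ M', f x ∈ F x) ∧
        ∀ x ∈ M', ∀ y ∈ M', ‖f x - f y‖ ≤ ρ x y)
    (lam1 lam2 : ℝ) (hlam1 : 1 ≤ lam1) (hlam2 : 3 * lam1 ≤ lam2)
    (F1 F2 : M → Set X)
    (hF1 : ∀ x, F1 x = ⋂ z, F z + closedBall (0 : X) (lam1 * ρ x z))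
    (hF2 : ∀ x, F2 x = ⋂ z, F1 z + closedBall (0 : X) (lam2 * ρ x z)) :
    ∀ x, (F2 x).Nonempty :=
  second_refinement_nonempty_one_dim_general ρ hρ_refl hρ_symm hρ_tri F hFcp hFcv hFdim hfin lam1
    lam2 hlam1 hlam2 F1 F2 hF1 hF2
end
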